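/- Satisfiability of 'interesting' formulas reduces to first-order satisfiability: define the class of interesting formulas inductively by (i) every first-order formula is interesting, (ii) if F₁ and F₂ are interesting then F₁ ⋆ F₂ is interesting, and (iii) if F₁ and F₂ are interesting then F₁ ∨ F₂ is interesting. Then for every interesting formula F there is a first-order formula F̂ in an extended vocabulary (obtained by recursively replacing each subformula G₁ ⋆ G₂ with btr(G₁ ⋆ G₂) using fresh primed copies of the predicate symbols) such that F is satisfiable iff F̂ is satisfiable. -/

import Mathlib

/-- An environment (model with variable assignment): interprets unary predicate
symbols from `𝒜`, binary predicate symbols from `ℱ`, and variables from `V`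
over the domain `D`. -/
structure Env (𝒜 ℱ V D : Type) where
  un : 𝒜 → D → Prop
  bin : ℱ → D → D → Prop
  var : V → D

variable {𝒜 ℱ V D : Type}

/-- `e.Split e₁ e₂`: the relations of `e` split as a disjoint union into `e₁`
and `e₂`, and the variable assignments agree with those of `e`. -/
def Env.Split (e e₁ e₂ : Env 𝒜 ℱ V D) : Prop :=
  e₁.var = e.var ∧ e₂.var = e.var ∧
  (∀ A d, (e.un A d ↔ (e₁.un A d ∨ e₂.un A d)) ∧ ¬(e₁.un A d ∧ e₂.un A d)) ∧
  (∀ f d₁ d₂, (e.bin f d₁ d₂ ↔ (e₁.bin f d₁ d₂ ∨ e₂.bin f d₁ d₂)) ∧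
      ¬(e₁.bin f d₁ d₂ ∧ e₂.bin f d₁ d₂))

/-- Spatial conjunction of predicates on environments. -/
def spand (P Q : Env 𝒜 ℱ V D → Prop) (e : Env 𝒜 ℱ V D) : Prop :=
  ∃ e₁ e₂, e.Split e₁ e₂ ∧ P e₁ ∧ Q e₂

/-! ## Syntax and semantics of first-order logic with counting quantifiers -/

/-- Counting quantifier specifications: `∃^{=k}` and `∃^{≥k}`. -/
inductive CQ : Type where
  | exact : ℕ → CQ
  | atLeast : ℕ → CQ
deriving DecidableEq

/-- A counting quantifier specification is satisfied by a cardinality `c`. -/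
def CQ.sat : CQ → ℕ → Prop
  | .exact k, c => c = k
  | .atLeast k, c => k ≤ c

/-- `c ∈ C_{k+1}`: `c` is `=i` for some `i ≤ k`, or `≥ k+1`. -/
def CQ.degLE (k : ℕ) : CQ → Prop
  | .exact i => i ≤ k
  | .atLeast i => i = k + 1

/-- Formulas of first-order predicate calculus with equality and counting
quantifiers, over unary symbols `𝒜`, binary symbols `ℱ`, variables `V`. -/
inductive Fml (𝒜 ℱ V : Type) : Type where
  | un : 𝒜 → V → Fml 𝒜 ℱ V
  | bin : ℱ → V → V → Fml 𝒜 ℱ V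
  | eq : V → V → Fml 𝒜 ℱ V
  | fls : Fml 𝒜 ℱ V
  | and : Fml 𝒜 ℱ V → Fml 𝒜 ℱ V → Fml 𝒜 ℱ V
  | or : Fml 𝒜 ℱ V → Fml 𝒜 ℱ V → Fml 𝒜 ℱ V
  | not : Fml 𝒜 ℱ V → Fml 𝒜 ℱ V
  | cnt : CQ → V → Fml 𝒜 ℱ V → Fml 𝒜 ℱ V

/-- Update the value of a variable in an environment. -/
def Env.updVar [DecidableEq V] (e : Env 𝒜 ℱ V D) (v : V) (d : D) : Env 𝒜 ℱ V D :=
  { e with var := Function.update e.var v d }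

/-- Satisfaction of a formula in an environment. -/
def Fml.Sat [DecidableEq V] : Fml 𝒜 ℱ V → Env 𝒜 ℱ V D → Prop
  | .un A v, e => e.un A (e.var v)
  | .bin f v w, e => e.bin f (e.var v) (e.var w)
  | .eq v w, e => e.var v = e.var w
  | .fls, _ => False
  | .and F G, e => F.Sat e ∧ G.Sat e
  | .or F G, e => F.Sat e ∨ G.Sat e
  | .not F, e => ¬ F.Sat e
  | .cnt c v F, e => c.sat {d : D | F.Sat (e.updVar v d)}.ncard

/-- Quantifier depth; each counting quantifier counts as one quantifier. -/
def Fml.qdepth : Fml 𝒜 ℱ V → ℕ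
  | .un _ _ => 0
  | .bin _ _ _ => 0
  | .eq _ _ => 0
  | .fls => 0
  | .and F G => max F.qdepth G.qdepth
  | .or F G => max F.qdepth G.qdepth
  | .not F => F.qdepth
  | .cnt _ _ F => F.qdepth + 1

/-- Free variables of a formula. -/
def Fml.fv [DecidableEq V] : Fml 𝒜 ℱ V → Finset V
  | .un _ v => {v}
  | .bin _ v w => {v, w}
  | .eq v w => {v, w}
  | .fls => ∅
  | .and F G => F.fv ∪ G.fv
  | .or F G => F.fv ∪ G.fv
  | .not F => F.fv
  | .cnt _ v F => F.fv.erase v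

/-- `F.DegLE k`: `F` has counting degree at most `k`, i.e. all counting
quantifiers of `F` are `∃^c` with `c ∈ C_{k+1}`. -/
def Fml.DegLE (k : ℕ) : Fml 𝒜 ℱ V → Prop
  | .un _ _ => True
  | .bin _ _ _ => True
  | .eq _ _ => True
  | .fls => True
  | .and F G => F.DegLE k ∧ G.DegLE k
  | .or F G => F.DegLE k ∧ G.DegLE k
  | .not F => F.DegLE k
  | .cnt c _ F => c.degLE k ∧ F.DegLE k

/-! ## Atomic formulas, complete atomic types -/

/-- Atomic formulas over unary symbols `𝒜`, binary symbols `ℱ`, variables `V`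
(including equality atoms). -/
inductive Atom (𝒜 ℱ V : Type) : Type where
  | un : 𝒜 → V → Atom 𝒜 ℱ V
  | bin : ℱ → V → V → Atom 𝒜 ℱ V
  | eq : V → V → Atom 𝒜 ℱ V
deriving DecidableEq

def Atom.toFml : Atom 𝒜 ℱ V → Fml 𝒜 ℱ V
  | .un A v => .un A v
  | .bin f v w => .bin f v w
  | .eq v w => .eq v w

/-- The variables occurring in an atomic formula. -/
def Atom.varset [DecidableEq V] : Atom 𝒜 ℱ V → Finset V
  | .un _ v => {v}
  | .bin _ v w => {v, w}
  | .eq v w => {v, w}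

/-- Whether an atom is an equality atom. -/
def Atom.isEq : Atom 𝒜 ℱ V → Bool
  | .eq _ _ => true
  | _ => false

def atomEquiv (𝒜 ℱ V : Type) :
    Atom 𝒜 ℱ V ≃ ((𝒜 × V) ⊕ ((ℱ × V × V) ⊕ (V × V))) where
  toFun a := match a with
    | .un A v => Sum.inl (A, v)
    | .bin f v w => Sum.inr (Sum.inl (f, v, w))
    | .eq v w => Sum.inr (Sum.inr (v, w))
  invFun s := match s with
    | Sum.inl (A, v) => .un A v
    | Sum.inr (Sum.inl (f, v, w)) => .bin f v w
    | Sum.inr (Sum.inr (v, w)) => .eq v w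
  left_inv a := by cases a <;> rfl
  right_inv s := by rcases s with ⟨A, v⟩ | ⟨f, v, w⟩ | ⟨v, w⟩ <;> rfl

instance [Fintype 𝒜] [Fintype ℱ] [Fintype V] : Fintype (Atom 𝒜 ℱ V) :=
  Fintype.ofEquiv _ (atomEquiv 𝒜 ℱ V).symm

/-- Conjunction of a list of formulas (empty conjunction is `¬⊥`, i.e. true). -/
def listConj (l : List (Fml 𝒜 ℱ V)) : Fml 𝒜 ℱ V := l.foldr .and (.not .fls)

/-- Disjunction of a list of formulas (empty disjunction is `⊥`). -/
def listDisj (l : List (Fml 𝒜 ℱ V)) : Fml 𝒜 ℱ V := l.foldr .or .fls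

/-- Conjunction of a list of atoms, each taken positively or negatively
according to the sign assignment `σ`. -/
def signedConj (l : List (Atom 𝒜 ℱ V)) (σ : Atom 𝒜 ℱ V → Bool) : Fml 𝒜 ℱ V :=
  listConj (l.map fun a => if σ a then a.toFml else .not a.toFml)

/-- Rename the predicate symbols of a formula. -/
def Fml.mapSym {𝒜 ℱ 𝒜' ℱ' V : Type} (fA : 𝒜 → 𝒜') (fF : ℱ → ℱ') :
    Fml 𝒜 ℱ V → Fml 𝒜' ℱ' V
  | .un A v => .un (fA A) v
  | .bin f v w => .bin (fF f) v w
  | .eq v w => .eq v w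
  | .fls => .fls
  | .and F G => .and (F.mapSym fA fF) (G.mapSym fA fF)
  | .or F G => .or (F.mapSym fA fF) (G.mapSym fA fF)
  | .not F => .not (F.mapSym fA fF)
  | .cnt c v F => .cnt c v (F.mapSym fA fF)

/-- Universal quantification, encoded as `∃^{=0} v. ¬F`. -/
def Fml.all (v : V) (F : Fml 𝒜 ℱ V) : Fml 𝒜 ℱ V := .cnt (.exact 0) v (.not F)

/-- Biimplication of formulas. -/
def Fml.iff (F G : Fml 𝒜 ℱ V) : Fml 𝒜 ℱ V :=
  (F.and G).or ((Fml.not F).and (Fml.not G))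

/-- `Split₁(A, A′, A″) ≡ ∀x. (A(x) ↔ (A′(x) ∨ A″(x))) ∧ ¬(A′(x) ∧ A″(x))`.
Variables are natural numbers; `x` is the variable `0`. -/
def split1Fml {𝒜 ℱ : Type} (A A' A'' : 𝒜) : Fml 𝒜 ℱ ℕ :=
  Fml.all 0 <|
    ((Fml.un A 0).iff ((Fml.un A' 0).or (Fml.un A'' 0))).and
      (.not ((Fml.un A' 0).and (Fml.un A'' 0)))

/-- `Split₂(f, f′, f″) ≡
∀x y. (f(x,y) ↔ (f′(x,y) ∨ f″(x,y))) ∧ ¬(f′(x,y) ∧ f″(x,y))`.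
`x`, `y` are the variables `0`, `1`. -/
def split2Fml {𝒜 ℱ : Type} (f f' f'' : ℱ) : Fml 𝒜 ℱ ℕ :=
  Fml.all 0 <| Fml.all 1 <|
    ((Fml.bin f 0 1).iff ((Fml.bin f' 0 1).or (Fml.bin f'' 0 1))).and
      (.not ((Fml.bin f' 0 1).and (Fml.bin f'' 0 1)))

/-- The class of "interesting" formulas: first-order formulas are
interesting, and the class is closed under spatial conjunction `⋆` and
disjunction `∨`. -/
inductive IFml (𝒜 ℱ V : Type) : Type where
  | fo : Fml 𝒜 ℱ V → IFml 𝒜 ℱ V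
  | star : IFml 𝒜 ℱ V → IFml 𝒜 ℱ V → IFml 𝒜 ℱ V
  | or : IFml 𝒜 ℱ V → IFml 𝒜 ℱ V → IFml 𝒜 ℱ V

/-- Satisfaction of interesting formulas; `star` is interpreted by splitting
the interpretations of all predicate symbols of the vocabulary as disjoint
unions. -/
def IFml.Sat {𝒜 ℱ V D : Type} [DecidableEq V] :
    IFml 𝒜 ℱ V → Env 𝒜 ℱ V D → Prop
  | .fo F, e => F.Sat e
  | .star F G, e => ∃ e₁ e₂, e.Split e₁ e₂ ∧ F.Sat e₁ ∧ G.Sat e₂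
  | .or F G, e => F.Sat e ∨ G.Sat e

/-- Tagged copies of the predicate symbols: the fresh primed copies introduced
by the recursive replacement of spatial conjunctions are addressed by a list
of booleans (`false` = left/primed copy, `true` = right/double-primed copy). -/
abbrev TSym (S : Type) : Type := S × List Bool

/-- The recursive translation of an interesting formula into a first-order
formula over the extended vocabulary of tagged symbols: each subformula
`G₁ ⋆ G₂` is replaced by `btr(G₁ ⋆ G₂)`, using fresh copies of the predicate
symbols for the two conjuncts. -/
noncomputable def hatAux {𝒜 ℱ : Type} [Fintype 𝒜] [Fintype ℱ]
    (t : List Bool) : IFml 𝒜 ℱ ℕ → Fml (TSym 𝒜) (TSym ℱ) ℕ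
  | .fo F => F.mapSym (fun A => (A, t)) (fun f => (f, t))
  | .or F G => (hatAux t F).or (hatAux t G)
  | .star F G =>
      (listConj ((Finset.univ : Finset 𝒜).toList.map fun A =>
          split1Fml (A, t) (A, t ++ [false]) (A, t ++ [true]))).and <|
      (listConj ((Finset.univ : Finset ℱ).toList.map fun f =>
          split2Fml (f, t) (f, t ++ [false]) (f, t ++ [true]))).and <|
      ((hatAux (t ++ [false]) F).and (hatAux (t ++ [true]) G))

/-! `hatAux (t ++ s) F` is `hatAux s F` with every tag prefixed by `t`, so a model `E` of
`hatAux [] F` encodes a tree of environments: the symbols tagged `[]` form the root, which the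
`Split₁`/`Split₂` conjuncts of a `⋆` split into the roots of the subtrees `E.shift [false]` and
`E.shift [true]`; projecting to the root therefore gives a model of `F`. Conversely, models of
the two conjuncts of `F ⋆ G` are grafted below a new root. -/

lemma Fml.mapSym_mapSym {𝒜' ℱ' 𝒜'' ℱ'' : Type} (fA : 𝒜 → 𝒜') (fF : ℱ → ℱ')
    (gA : 𝒜' → 𝒜'') (gF : ℱ' → ℱ'') (F : Fml 𝒜 ℱ V) :
    (F.mapSym fA fF).mapSym gA gF = F.mapSym (gA ∘ fA) (gF ∘ fF) := by
  induction F <;> simp [Fml.mapSym, *]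

lemma mapSym_listConj {𝒜' ℱ' : Type} (fA : 𝒜 → 𝒜') (fF : ℱ → ℱ') (l : List (Fml 𝒜 ℱ V)) :
    (listConj l).mapSym fA fF = listConj (l.map (Fml.mapSym fA fF)) := by
  induction l with
  | nil => rfl
  | cons F l ih => simp only [listConj, List.foldr_cons, List.map_cons] at ih ⊢; rw [← ih]; rfl

lemma Fml.sat_mapSym {𝒜' ℱ' : Type} [DecidableEq V] (fA : 𝒜 → 𝒜') (fF : ℱ → ℱ')
    (F : Fml 𝒜 ℱ V) (e : Env 𝒜' ℱ' V D) :
    (F.mapSym fA fF).Sat e ↔ F.Sat ⟨fun A => e.un (fA A), fun f => e.bin (fF f), e.var⟩ := by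
  induction F generalizing e with
  | cnt c v F ih =>
    simp only [Fml.mapSym, Fml.Sat]
    exact iff_of_eq (congrArg (fun s : Set D => c.sat s.ncard) (Set.ext fun d => ih _))
  | _ => simp [Fml.mapSym, Fml.Sat, *]

lemma sat_listConj [DecidableEq V] (l : List (Fml 𝒜 ℱ V)) (e : Env 𝒜 ℱ V D) :
    (listConj l).Sat e ↔ ∀ F ∈ l, F.Sat e := by
  induction l with
  | nil => simp [listConj, Fml.Sat]
  | cons F l ih => simp [listConj, Fml.Sat, ← ih]

lemma sat_listConj_univ {ι : Type} [Fintype ι] [DecidableEq V] (φ : ι → Fml 𝒜 ℱ V)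
    (e : Env 𝒜 ℱ V D) :
    (listConj ((Finset.univ : Finset ι).toList.map φ)).Sat e ↔ ∀ i, (φ i).Sat e := by
  simp [sat_listConj]

/-- Over an infinite domain `ncard` of the counterexample set is `0`, so `Fml.all` means `∀`
only on finite domains. -/
lemma Fml.sat_all [DecidableEq V] [Finite D] (v : V) (F : Fml 𝒜 ℱ V) (e : Env 𝒜 ℱ V D) :
    (Fml.all v F).Sat e ↔ ∀ d, F.Sat (e.updVar v d) := by
  simp only [Fml.all, Fml.Sat, CQ.sat]
  rw [Set.ncard_eq_zero (Set.toFinite _), Set.eq_empty_iff_forall_notMem]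
  simp

lemma Fml.sat_iff [DecidableEq V] (F G : Fml 𝒜 ℱ V) (e : Env 𝒜 ℱ V D) :
    (F.iff G).Sat e ↔ (F.Sat e ↔ G.Sat e) := by
  simp only [Fml.iff, Fml.Sat]
  tauto

lemma sat_split1Fml [Finite D] (A A' A'' : 𝒜) (e : Env 𝒜 ℱ ℕ D) :
    (split1Fml A A' A'' : Fml 𝒜 ℱ ℕ).Sat e ↔
      ∀ d, (e.un A d ↔ (e.un A' d ∨ e.un A'' d)) ∧ ¬(e.un A' d ∧ e.un A'' d) := by
  simp only [split1Fml, Fml.sat_all, Fml.Sat, Fml.sat_iff, Env.updVar, Function.update_self]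

lemma sat_split2Fml [Finite D] (f f' f'' : ℱ) (e : Env 𝒜 ℱ ℕ D) :
    (split2Fml f f' f'' : Fml 𝒜 ℱ ℕ).Sat e ↔
      ∀ d₁ d₂, (e.bin f d₁ d₂ ↔ (e.bin f' d₁ d₂ ∨ e.bin f'' d₁ d₂)) ∧
        ¬(e.bin f' d₁ d₂ ∧ e.bin f'' d₁ d₂) := by
  simp only [split2Fml, Fml.sat_all, Fml.Sat, Fml.sat_iff, Env.updVar, Function.update_apply]
  simp

namespace Env

def root (E : Env (TSym 𝒜) (TSym ℱ) V D) : Env 𝒜 ℱ V D :=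
  ⟨fun A => E.un (A, []), fun f => E.bin (f, []), E.var⟩

def shift (t : List Bool) (E : Env (TSym 𝒜) (TSym ℱ) V D) : Env (TSym 𝒜) (TSym ℱ) V D :=
  ⟨fun A => E.un (A.1, t ++ A.2), fun f => E.bin (f.1, t ++ f.2), E.var⟩

def untagged (e : Env 𝒜 ℱ V D) : Env (TSym 𝒜) (TSym ℱ) V D :=
  ⟨fun A => e.un A.1, fun f => e.bin f.1, e.var⟩

def graft (e : Env 𝒜 ℱ V D) (E₁ E₂ : Env (TSym 𝒜) (TSym ℱ) V D) :
    Env (TSym 𝒜) (TSym ℱ) V D where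
  un A := match A.2 with
    | [] => e.un A.1
    | false :: s => E₁.un (A.1, s)
    | true :: s => E₂.un (A.1, s)
  bin f := match f.2 with
    | [] => e.bin f.1
    | false :: s => E₁.bin (f.1, s)
    | true :: s => E₂.bin (f.1, s)
  var := e.var

lemma shift_false_graft (e : Env 𝒜 ℱ V D) (E₁ E₂ : Env (TSym 𝒜) (TSym ℱ) V D)
    (h : E₁.var = e.var) : (graft e E₁ E₂).shift [false] = E₁ := by
  cases E₁; subst h; rfl

lemma shift_true_graft (e : Env 𝒜 ℱ V D) (E₁ E₂ : Env (TSym 𝒜) (TSym ℱ) V D)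
    (h : E₂.var = e.var) : (graft e E₁ E₂).shift [true] = E₂ := by
  cases E₂; subst h; rfl

end Env

section Translation

variable [Fintype 𝒜] [Fintype ℱ]

lemma hatAux_append (t s : List Bool) (F : IFml 𝒜 ℱ ℕ) :
    hatAux (t ++ s) F =
      (hatAux s F).mapSym (fun A => (A.1, t ++ A.2)) (fun f => (f.1, t ++ f.2)) := by
  induction F generalizing s with
  | fo F => simp only [hatAux, Fml.mapSym_mapSym]; rfl
  | or F G ihF ihG => simp only [hatAux, Fml.mapSym, ihF, ihG]
  | star F G ihF ihG =>
    simp only [hatAux, Fml.mapSym, mapSym_listConj, List.map_map, List.append_assoc, ihF, ihG]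
    rfl

lemma sat_hatAux_iff_shift (t : List Bool) (F : IFml 𝒜 ℱ ℕ)
    (E : Env (TSym 𝒜) (TSym ℱ) ℕ D) :
    (hatAux t F).Sat E ↔ (hatAux [] F).Sat (E.shift t) := by
  rw [← List.append_nil t, hatAux_append, Fml.sat_mapSym, List.append_nil]
  rfl

lemma sat_hatAux_star [Finite D] (F G : IFml 𝒜 ℱ ℕ) (E : Env (TSym 𝒜) (TSym ℱ) ℕ D) :
    (hatAux [] (F.star G)).Sat E ↔
      E.root.Split (E.shift [false]).root (E.shift [true]).root ∧
        (hatAux [] F).Sat (E.shift [false]) ∧ (hatAux [] G).Sat (E.shift [true]) := by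
  simp only [hatAux, Fml.Sat, List.nil_append, sat_listConj_univ, sat_split1Fml, sat_split2Fml,
    sat_hatAux_iff_shift [false] F, sat_hatAux_iff_shift [true] G]
  exact ⟨fun ⟨hun, hbin, hsat⟩ => ⟨⟨rfl, rfl, hun, hbin⟩, hsat⟩,
    fun ⟨⟨_, _, hun, hbin⟩, hsat⟩ => ⟨hun, hbin, hsat⟩⟩

lemma IFml.sat_root_of_sat_hatAux [Finite D] (F : IFml 𝒜 ℱ ℕ)
    (E : Env (TSym 𝒜) (TSym ℱ) ℕ D) (h : (hatAux [] F).Sat E) : F.Sat E.root := by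
  induction F generalizing E with
  | fo F => exact (Fml.sat_mapSym _ _ F E).1 h
  | or F G ihF ihG => exact h.imp (ihF E) (ihG E)
  | star F G ihF ihG =>
    obtain ⟨hsplit, hF, hG⟩ := (sat_hatAux_star F G E).1 h
    exact ⟨_, _, hsplit, ihF _ hF, ihG _ hG⟩

lemma IFml.exists_sat_hatAux_of_sat [Finite D] (F : IFml 𝒜 ℱ ℕ) (e : Env 𝒜 ℱ ℕ D)
    (h : F.Sat e) : ∃ E : Env (TSym 𝒜) (TSym ℱ) ℕ D, E.root = e ∧ (hatAux [] F).Sat E := by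
  induction F generalizing e with
  | fo F => exact ⟨e.untagged, rfl, (Fml.sat_mapSym _ _ F _).2 h⟩
  | or F G ihF ihG =>
    rcases h with hF | hG
    · obtain ⟨E, hE, hsat⟩ := ihF e hF
      exact ⟨E, hE, Or.inl hsat⟩
    · obtain ⟨E, hE, hsat⟩ := ihG e hG
      exact ⟨E, hE, Or.inr hsat⟩
  | star F G ihF ihG =>
    obtain ⟨e₁, e₂, hsplit, hF, hG⟩ := h
    obtain ⟨E₁, rfl, hE₁⟩ := ihF e₁ hF
    obtain ⟨E₂, rfl, hE₂⟩ := ihG e₂ hG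
    have h₁ := Env.shift_false_graft e E₁ E₂ hsplit.1
    have h₂ := Env.shift_true_graft e E₁ E₂ hsplit.2.1
    refine ⟨Env.graft e E₁ E₂, rfl, (sat_hatAux_star F G _).2 ?_⟩
    rw [h₁, h₂]
    exact ⟨hsplit, hE₁, hE₂⟩

end Translation

theorem interesting_equisatisfiable_general {𝒜 ℱ : Type}
    [Fintype 𝒜] [Fintype ℱ]
    (F : IFml 𝒜 ℱ ℕ) :
    (∃ (D : Type) (_ : Finite D) (_ : Nonempty D) (e : Env 𝒜 ℱ ℕ D),
        F.Sat e) ↔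
    (∃ (D : Type) (_ : Finite D) (_ : Nonempty D)
        (e : Env (TSym 𝒜) (TSym ℱ) ℕ D),
        (hatAux [] F).Sat e) := by
  constructor
  · rintro ⟨D, hfin, hne, e, h⟩
    obtain ⟨E, -, hE⟩ := F.exists_sat_hatAux_of_sat e h
    exact ⟨D, hfin, hne, E, hE⟩
  · rintro ⟨D, hfin, hne, E, h⟩
    exact ⟨D, hfin, hne, E.root, F.sat_root_of_sat_hatAux E h⟩

/-- **Satisfiability of interesting formulas reduces to
first-order satisfiability.** For every interesting formula `F` there is a
first-order formula `F̂` in the extended vocabulary — obtained by recursively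
replacing each subformula `G₁ ⋆ G₂` with `btr(G₁ ⋆ G₂)` using fresh copies of
the predicate symbols — such that `F` is satisfiable iff `F̂` is satisfiable
(over finite nonempty domains). -/
theorem interesting_equisatisfiable {𝒜 ℱ : Type}
    [Fintype 𝒜] [DecidableEq 𝒜] [Fintype ℱ] [DecidableEq ℱ]
    (F : IFml 𝒜 ℱ ℕ) :
    (∃ (D : Type) (_ : Finite D) (_ : Nonempty D) (e : Env 𝒜 ℱ ℕ D),
        F.Sat e) ↔
    (∃ (D : Type) (_ : Finite D) (_ : Nonempty D)
        (e : Env (TSym 𝒜) (TSym ℱ) ℕ D),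
        (hatAux [] F).Sat e) :=
  interesting_equisatisfiable_general F
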